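/- arXiv:2302.03082 — 4 statements merged into one kernel-verified Lean document; each statement's English description precedes it below -/
import Mathlib

section
/- Let $b>0$, $\theta>0$, and $\bar{\mu}:(0,\infty)\to[0,\infty)$ be nonincreasing, right-continuous, finite. Set $f_\theta(x)=\int_x^\infty e^{-\frac{\theta}{b}s}\exp\left(\frac{1}{b}\int_s^1\bar{\mu}(u)du\right)ds$. Then for every $x>0$, $f_\theta$ is differentiable at $x$ with $f_\theta'(x)=-e^{-\frac{\theta}{b}x}\exp\left(\frac{1}{b}\int_x^1\bar{\mu}(u)du\right)$, and $f_\theta$ satisfies the integral equation $\int_x^\infty \bar{\mu}(v)f_\theta'(v)\,dv - b f_\theta'(x) = \theta f_\theta(x)$. -/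
/-!
Let `w(s) = exp (-(θ s - ∫_s^1 μ̄) / b)` be the integrand of `f_θ`, so `f_θ' = -w`. A monotone
`μ̄` is continuous off a countable set, and there `w' = -((θ + μ̄) / b) w`; hence the fundamental
theorem of calculus gives `∫_x^T (θ + μ̄) w = b w(x) - b w(T)`. Since `μ̄ ≥ 0`, `∫_s^1 μ̄` is
antitone, so `w(s) ≤ C e^{-θ s / b}` on `[x, ∞)`: `w` is integrable and `w(T) → 0`, and letting
`T → ∞` yields `θ f_θ(x) + ∫_x^∞ μ̄ w = b w(x)`, which is the claimed identity.
-/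

open MeasureTheory Set Filter Topology intervalIntegral

theorem hasDerivAt_integral_Ioi {E : Type*} [NormedAddCommGroup E] [NormedSpace ℝ E]
    [CompleteSpace E] {w : ℝ → E} {a x : ℝ} (hw : IntegrableOn w (Ioi a)) (hax : a < x)
    (hx : ContinuousAt w x) : HasDerivAt (fun y => ∫ s in Ioi y, w s) (-w x) x := by
  have hprim : HasDerivAt (fun y => ∫ s in a..y, w s) (w x) x :=
    integral_hasDerivAt_right
      ((intervalIntegrable_iff_integrableOn_Ioc_of_le hax.le).2 (hw.mono_set Ioc_subset_Ioi_self))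
      (AEStronglyMeasurable.stronglyMeasurableAtFilter_of_mem hw.aestronglyMeasurable
        (Ioi_mem_nhds hax)) hx
  refine (hprim.const_sub (∫ s in Ioi a, w s)).congr_of_eventuallyEq ?_
  filter_upwards [Ioi_mem_nhds hax] with y hy
  rw [← integral_Ioi_sub_Ioi hw hy.le, sub_sub_cancel]

namespace AntitoneOn

variable {μ : ℝ → ℝ}

theorem intervalIntegrable_of_pos (hμ : AntitoneOn μ (Ioi 0)) {p q : ℝ} (hp : 0 < p)
    (hq : 0 < q) : IntervalIntegrable μ volume p q :=
  (hμ.mono fun _ hu => (lt_min hp hq).trans_le hu.1).intervalIntegrable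

theorem stronglyMeasurableAtFilter_of_pos (hμ : AntitoneOn μ (Ioi 0)) {v : ℝ} (hv : 0 < v) :
    StronglyMeasurableAtFilter μ (𝓝 v) :=
  AEStronglyMeasurable.stronglyMeasurableAtFilter_of_mem
    (aemeasurable_restrict_of_antitoneOn measurableSet_Ioi hμ).aestronglyMeasurable
    (Ioi_mem_nhds hv)

theorem continuousAt_integral_left (hμ : AntitoneOn μ (Ioi 0)) {c v : ℝ} (hc : 0 < c)
    (hv : 0 < v) :
    ContinuousAt (fun s => ∫ u in s..c, μ u) v := by
  have hprim : ContinuousWithinAt (fun s => ∫ u in c..s, μ u) (Icc (v / 2) (v + 1)) v :=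
    continuousWithinAt_primitive (measure_singleton v)
      (hμ.intervalIntegrable_of_pos (lt_min hc (half_pos hv)) (lt_max_of_lt_left hc))
  rw [funext fun s => integral_symm (μ := volume) (f := μ) c s]
  exact (hprim.continuousAt (Icc_mem_nhds (half_lt_self hv) (lt_add_one v))).neg

theorem hasDerivAt_integral_left (hμ : AntitoneOn μ (Ioi 0)) {c v : ℝ} (hc : 0 < c)
    (hv : 0 < v) (hμv : ContinuousAt μ v) :
    HasDerivAt (fun s => ∫ u in s..c, μ u) (-μ v) v :=
  integral_hasDerivAt_left (hμ.intervalIntegrable_of_pos hv hc)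
    (hμ.stronglyMeasurableAtFilter_of_pos hv) hμv

theorem antitoneOn_integral_left (hμ : AntitoneOn μ (Ioi 0)) (hμ₀ : ∀ x, 0 < x → 0 ≤ μ x)
    {c : ℝ} (hc : 0 < c) :
    AntitoneOn (fun s => ∫ u in s..c, μ u) (Ioi 0) := by
  intro a ha s _ has
  have hsplit := integral_interval_sub_left (hμ.intervalIntegrable_of_pos ha hc)
    (hμ.intervalIntegrable_of_pos ha (ha.trans_le has))
  have hnonneg : 0 ≤ ∫ u in a..s, μ u :=
    integral_nonneg has fun u hu => hμ₀ u (lt_of_lt_of_le ha hu.1)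
  dsimp only
  linarith

end AntitoneOn

noncomputable def esnWeight (b θ : ℝ) (μ : ℝ → ℝ) (s : ℝ) : ℝ :=
  Real.exp (-(θ / b) * s) * Real.exp ((1 / b) * ∫ u in s..1, μ u)

namespace esnWeight

variable {b θ : ℝ} {μ : ℝ → ℝ}

theorem pos (s : ℝ) : 0 < esnWeight b θ μ s :=
  mul_pos (Real.exp_pos _) (Real.exp_pos _)

theorem continuousAt (hμ : AntitoneOn μ (Ioi 0)) {v : ℝ} (hv : 0 < v) :
    ContinuousAt (esnWeight b θ μ) v :=
  (Real.continuous_exp.comp (continuous_const_mul _)).continuousAt.mul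
    (((hμ.continuousAt_integral_left one_pos hv).const_mul _).rexp)

theorem hasDerivAt (hμ : AntitoneOn μ (Ioi 0)) {v : ℝ} (hv : 0 < v) (hμv : ContinuousAt μ v) :
    HasDerivAt (esnWeight b θ μ) (-((θ + μ v) / b) * esnWeight b θ μ v) v := by
  have hexp := ((hasDerivAt_id v).const_mul (-(θ / b))).exp.mul
    ((hμ.hasDerivAt_integral_left one_pos hv hμv).const_mul (1 / b)).exp
  refine hexp.congr_deriv ?_
  simp only [esnWeight, id]
  ring

theorem le_const_mul_exp (hb : 0 < b) (hμ : AntitoneOn μ (Ioi 0)) (hμ₀ : ∀ x, 0 < x → 0 ≤ μ x)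
    {a s : ℝ} (ha : 0 < a) (has : a ≤ s) :
    esnWeight b θ μ s ≤ Real.exp ((1 / b) * ∫ u in a..1, μ u) * Real.exp (-(θ / b) * s) := by
  rw [esnWeight, mul_comm]
  gcongr
  exact hμ.antitoneOn_integral_left hμ₀ one_pos ha (ha.trans_le has) has

theorem integrableOn_Ioi (hb : 0 < b) (hθ : 0 < θ) (hμ : AntitoneOn μ (Ioi 0))
    (hμ₀ : ∀ x, 0 < x → 0 ≤ μ x) {a : ℝ} (ha : 0 < a) :
    IntegrableOn (esnWeight b θ μ) (Ioi a) := by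
  refine ((exp_neg_integrableOn_Ioi a (div_pos hθ hb)).const_mul
    (Real.exp ((1 / b) * ∫ u in a..1, μ u))).mono' ?_ ?_
  · exact ContinuousOn.aestronglyMeasurable
      (fun s hs => (continuousAt hμ (ha.trans hs)).continuousWithinAt) measurableSet_Ioi
  · filter_upwards [ae_restrict_mem measurableSet_Ioi] with s hs
    rw [Real.norm_of_nonneg (pos s).le]
    exact le_const_mul_exp hb hμ hμ₀ ha hs.le

theorem integrableOn_Ioi_mul (hb : 0 < b) (hθ : 0 < θ) (hμ : AntitoneOn μ (Ioi 0))
    (hμ₀ : ∀ x, 0 < x → 0 ≤ μ x) {a : ℝ} (ha : 0 < a) :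
    IntegrableOn (fun v => μ v * esnWeight b θ μ v) (Ioi a) := by
  refine (integrableOn_Ioi hb hθ hμ hμ₀ ha).bdd_mul (c := μ a)
    ((aemeasurable_restrict_of_antitoneOn measurableSet_Ioi hμ).aestronglyMeasurable.mono_measure
      (Measure.restrict_mono (Ioi_subset_Ioi ha.le) le_rfl)) ?_
  filter_upwards [ae_restrict_mem measurableSet_Ioi] with v hv
  rw [Real.norm_of_nonneg (hμ₀ v (ha.trans hv))]
  exact hμ ha (ha.trans hv) hv.le

theorem tendsto_atTop (hb : 0 < b) (hθ : 0 < θ) (hμ : AntitoneOn μ (Ioi 0))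
    (hμ₀ : ∀ x, 0 < x → 0 ≤ μ x) :
    Tendsto (esnWeight b θ μ) atTop (𝓝 0) := by
  have hexp : Tendsto (fun s => Real.exp ((1 / b) * ∫ u in (1 : ℝ)..1, μ u) *
      Real.exp (-(θ / b) * s)) atTop (𝓝 0) := by
    simpa only [Function.comp_def, id, neg_mul, mul_zero] using
      (Real.tendsto_exp_neg_atTop_nhds_zero.comp
        (tendsto_id.const_mul_atTop (div_pos hθ hb))).const_mul _
  refine squeeze_zero' (Eventually.of_forall fun s => (pos s).le) ?_ hexp
  filter_upwards [eventually_ge_atTop 1] with s hs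
  exact le_const_mul_exp hb hμ hμ₀ one_pos hs

theorem integrableOn_Ioi_theta_mul_add_mul (hb : 0 < b) (hθ : 0 < θ) (hμ : AntitoneOn μ (Ioi 0))
    (hμ₀ : ∀ x, 0 < x → 0 ≤ μ x) {x : ℝ} (hx : 0 < x) :
    IntegrableOn (fun v => θ * esnWeight b θ μ v + μ v * esnWeight b θ μ v) (Ioi x) :=
  ((integrableOn_Ioi hb hθ hμ hμ₀ hx).const_mul θ).add
    (integrableOn_Ioi_mul hb hθ hμ hμ₀ hx)

theorem intervalIntegral_theta_mul_add_mul (hb : 0 < b) (hθ : 0 < θ) (hμ : AntitoneOn μ (Ioi 0))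
    (hμ₀ : ∀ x, 0 < x → 0 ≤ μ x) {x T : ℝ} (hx : 0 < x) (hxT : x ≤ T) :
    ∫ v in x..T, (θ * esnWeight b θ μ v + μ v * esnWeight b θ μ v) =
      b * esnWeight b θ μ x - b * esnWeight b θ μ T := by
  have hderiv : ∀ v ∈ Ioo x T \ {v | v ∈ Ioi 0 ∧ ¬ContinuousWithinAt μ (Ioi 0) v},
      HasDerivAt (fun v => -b * esnWeight b θ μ v)
        (θ * esnWeight b θ μ v + μ v * esnWeight b θ μ v) v := by
    rintro v ⟨hv, hcont⟩
    have hv0 : 0 < v := hx.trans hv.1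
    have hμv : ContinuousAt μ v := by
      simp only [mem_ofPred_eq, mem_Ioi, not_and, not_not] at hcont
      exact (hcont hv0).continuousAt (Ioi_mem_nhds hv0)
    refine ((hasDerivAt hμ hv0 hμv).const_mul (-b)).congr_deriv ?_
    field_simp
  have hcont : ContinuousOn (fun v => -b * esnWeight b θ μ v) (Icc x T) := fun v hv =>
    ((continuousAt hμ (hx.trans_le hv.1)).const_mul (-b)).continuousWithinAt
  rw [integral_eq_of_hasDerivAt_off_countable_of_le _ _ hxT hμ.countable_not_continuousWithinAt
    hcont hderiv ((intervalIntegrable_iff_integrableOn_Ioc_of_le hxT).2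
      ((integrableOn_Ioi_theta_mul_add_mul hb hθ hμ hμ₀ hx).mono_set Ioc_subset_Ioi_self))]
  ring

theorem theta_mul_integral_Ioi_add_integral_Ioi_mul (hb : 0 < b) (hθ : 0 < θ)
    (hμ : AntitoneOn μ (Ioi 0)) (hμ₀ : ∀ x, 0 < x → 0 ≤ μ x) {x : ℝ} (hx : 0 < x) :
    θ * (∫ v in Ioi x, esnWeight b θ μ v) + ∫ v in Ioi x, μ v * esnWeight b θ μ v =
      b * esnWeight b θ μ x := by
  have hlim : Tendsto (fun T => b * esnWeight b θ μ x - b * esnWeight b θ μ T) atTop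
      (𝓝 (∫ v in Ioi x, (θ * esnWeight b θ μ v + μ v * esnWeight b θ μ v))) :=
    (intervalIntegral_tendsto_integral_Ioi x (integrableOn_Ioi_theta_mul_add_mul hb hθ hμ hμ₀ hx)
      tendsto_id).congr' <| (eventually_ge_atTop x).mono fun T hT =>
        intervalIntegral_theta_mul_add_mul hb hθ hμ hμ₀ hx hT
  have hlim' : Tendsto (fun T => b * esnWeight b θ μ x - b * esnWeight b θ μ T) atTop
      (𝓝 (b * esnWeight b θ μ x - b * 0)) :=
    tendsto_const_nhds.sub ((tendsto_atTop hb hθ hμ hμ₀).const_mul b)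
  rw [← MeasureTheory.integral_const_mul, ← MeasureTheory.integral_add
    ((integrableOn_Ioi hb hθ hμ hμ₀ hx).const_mul θ) (integrableOn_Ioi_mul hb hθ hμ hμ₀ hx),
    tendsto_nhds_unique hlim hlim', mul_zero, sub_zero]

end esnWeight

theorem esn_ftheta_invariant_general
    (b θ : ℝ) (hb : 0 < b) (hθ : 0 < θ)
    (μbar : ℝ → ℝ) (hmono : AntitoneOn μbar (Set.Ioi 0))
    (hnonneg : ∀ x, 0 < x → 0 ≤ μbar x)
    (f g : ℝ → ℝ)
    (hf : ∀ x, f x =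
      ∫ s in Set.Ioi x, Real.exp (-(θ / b) * s) * Real.exp ((1 / b) * ∫ u in s..1, μbar u))
    (hg : ∀ x, g x =
      -(Real.exp (-(θ / b) * x) * Real.exp ((1 / b) * ∫ u in x..1, μbar u))) :
    ∀ x : ℝ, 0 < x →
      HasDerivAt f (g x) x ∧
      (∫ v in Set.Ioi x, μbar v * g v) - b * g x = θ * f x := by
  obtain rfl : f = fun y => ∫ s in Ioi y, esnWeight b θ μbar s := funext hf
  obtain rfl : g = fun y => -esnWeight b θ μbar y := funext hg
  intro x hx
  refine ⟨hasDerivAt_integral_Ioi (esnWeight.integrableOn_Ioi hb hθ hmono hnonneg (half_pos hx))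
    (half_lt_self hx) (esnWeight.continuousAt hmono hx), ?_⟩
  have hinv := esnWeight.theta_mul_integral_Ioi_add_integral_Ioi_mul hb hθ hmono hnonneg hx
  simp only [mul_neg, MeasureTheory.integral_neg]
  linarith

/-- The function `f_θ` is differentiable on `(0,∞)` with explicit derivative, and
is `θ`-invariant for the generator: `∫_x^∞ μ̄ f_θ' - b f_θ'(x) = θ f_θ(x)`. -/
theorem esn_ftheta_invariant
    (b θ : ℝ) (hb : 0 < b) (hθ : 0 < θ)
    (μbar : ℝ → ℝ) (hmono : AntitoneOn μbar (Set.Ioi 0))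
    (hrc : ∀ x, 0 < x → ContinuousWithinAt μbar (Set.Ici x) x)
    (hnonneg : ∀ x, 0 < x → 0 ≤ μbar x)
    (f g : ℝ → ℝ)
    (hf : ∀ x, f x =
      ∫ s in Set.Ioi x, Real.exp (-(θ / b) * s) * Real.exp ((1 / b) * ∫ u in s..1, μbar u))
    (hg : ∀ x, g x =
      -(Real.exp (-(θ / b) * x) * Real.exp ((1 / b) * ∫ u in x..1, μbar u))) :
    ∀ x : ℝ, 0 < x →
      HasDerivAt f (g x) x ∧
      (∫ v in Set.Ioi x, μbar v * g v) - b * g x = θ * f x :=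
  esn_ftheta_invariant_general b θ hb hθ μbar hmono hnonneg f g hf hg
end

section
/- Let $b=1$ and $\bar{\mu}(x)=\frac{1}{x\log(1/x)}\mathbf{1}_{\{x<1/e\}}$. Then $\bar{\mu}(0^+)=\infty$, $\int_0^{1/e}\bar{\mu}(v)\,dv=\infty$, yet $\mathcal{J}:=\int_0^1\exp\left(\int_s^1\bar{\mu}(v)dv\right)ds<\infty$, and the stationary distribution satisfies $\pi([0,x])=1/\log(1/x)$ for all $0<x\leq 1/e$. -/
/-!
On `(0, e⁻¹)` the rate `μ̄ = 1 / (x log (1/x))` is the derivative of `-log (-log x)`, so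
`∫_x^{1/e} μ̄ = log (log (1/x))`. This tends to `∞` as `x → 0⁺`, which rules out integrability
near `0`, while `exp (∫_s^1 μ̄) = max (log (1/s)) 1` is integrable because `log` is.
-/

open Real MeasureTheory Filter Topology Set

noncomputable def loglogMuBar (x : ℝ) : ℝ :=
  if x < exp (-1) then 1 / (x * log (1 / x)) else 0

lemma one_div_mul_log_one_div (x : ℝ) : 1 / (x * log (1 / x)) = (negMulLog x)⁻¹ := by
  simp [negMulLog, log_inv]

lemma negMulLog_pos {x : ℝ} (hx0 : 0 < x) (hx1 : x < 1) : 0 < negMulLog x := by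
  simpa [negMulLog_eq_neg] using mul_log_neg hx0 hx1

lemma hasDerivAt_neg_log_neg_log {x : ℝ} (hx0 : 0 < x) (hx1 : x < 1) :
    HasDerivAt (fun y => -log (-log y)) (1 / (x * log (1 / x))) x := by
  have hlog : -log x ≠ 0 := by linarith [log_neg hx0 hx1]
  refine ((hasDerivAt_log hx0.ne').neg.log hlog).neg.congr_deriv ?_
  rw [one_div_mul_log_one_div, negMulLog, Pi.neg_apply]
  field_simp

lemma continuousOn_neg_log_neg_log {a b : ℝ} (ha : 0 < a) (hb : b < 1) :
    ContinuousOn (fun y => -log (-log y)) (Icc a b) := fun _ hx =>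
  (hasDerivAt_neg_log_neg_log (ha.trans_le hx.1) (hx.2.trans_lt hb)).continuousAt.continuousWithinAt

lemma tendsto_log_neg_log_nhdsGT_zero : Tendsto (fun x => log (-log x)) (𝓝[>] 0) atTop :=
  tendsto_log_atTop.comp (tendsto_neg_atBot_atTop.comp tendsto_log_nhdsGT_zero)

lemma not_integrableOn_Ioc_of_tendsto_intervalIntegral_atTop {f : ℝ → ℝ} {a b : ℝ} (hab : a < b)
    (h : Tendsto (fun x => ∫ v in x..b, f v) (𝓝[>] a) atTop) : ¬ IntegrableOn f (Ioc a b) := by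
  intro hf
  rw [← integrableOn_Icc_iff_integrableOn_Ioc, ← uIcc_of_le hab.le] at hf
  have hcont := intervalIntegral.continuousOn_primitive_interval_left hf a left_mem_uIcc
  have hle : 𝓝[>] a ≤ 𝓝[uIcc a b] a := by
    rw [← nhdsWithin_Ioc_eq_nhdsGT hab, uIcc_of_le hab.le]
    exact nhdsWithin_mono _ Ioc_subset_Icc_self
  exact not_tendsto_nhds_of_tendsto_atTop h _ (hcont.tendsto.mono_left hle)

lemma exp_neg_one_lt_one : exp (-1) < 1 := exp_lt_one_iff.mpr (by norm_num)

lemma loglogMuBar_eq_zero_of_le {x : ℝ} (hx : exp (-1) ≤ x) : loglogMuBar x = 0 :=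
  if_neg hx.not_gt

lemma loglogMuBar_nonneg {x : ℝ} (hx : 0 ≤ x) : 0 ≤ loglogMuBar x := by
  unfold loglogMuBar
  split_ifs with h
  · rw [one_div_mul_log_one_div]
    exact inv_nonneg.mpr (negMulLog_nonneg hx (h.trans exp_neg_one_lt_one).le)
  · exact le_rfl

lemma hasDerivAt_neg_log_neg_log_loglogMuBar {x : ℝ} (hx0 : 0 < x) (hx : x < exp (-1)) :
    HasDerivAt (fun y => -log (-log y)) (loglogMuBar x) x := by
  rw [loglogMuBar, if_pos hx]
  exact hasDerivAt_neg_log_neg_log hx0 (hx.trans exp_neg_one_lt_one)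

lemma integrableOn_loglogMuBar {a : ℝ} (ha : 0 < a) :
    IntegrableOn loglogMuBar (Ioc a (exp (-1))) :=
  intervalIntegral.integrableOn_deriv_of_nonneg (continuousOn_neg_log_neg_log ha exp_neg_one_lt_one)
    (fun _ hx => hasDerivAt_neg_log_neg_log_loglogMuBar (ha.trans hx.1) hx.2)
    (fun _ hx => loglogMuBar_nonneg (ha.trans hx.1).le)

lemma integral_loglogMuBar {a : ℝ} (ha : 0 < a) (hac : a ≤ exp (-1)) :
    ∫ v in a..exp (-1), loglogMuBar v = log (-log a) := by
  rw [intervalIntegral.integral_eq_sub_of_hasDerivAt_of_le hac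
    (continuousOn_neg_log_neg_log ha exp_neg_one_lt_one)
    (fun x hx => hasDerivAt_neg_log_neg_log_loglogMuBar (ha.trans hx.1) hx.2)
    ((intervalIntegrable_iff_integrableOn_Ioc_of_le hac).mpr (integrableOn_loglogMuBar ha))]
  simp

lemma tendsto_loglogMuBar_nhdsGT_zero : Tendsto loglogMuBar (𝓝[>] 0) atTop := by
  have hpos : Tendsto negMulLog (𝓝[>] 0) (𝓝[>] 0) := by
    refine tendsto_nhdsWithin_of_tendsto_nhds_of_eventually_within _ ?_ ?_
    · simpa using continuous_negMulLog.tendsto' 0 0 negMulLog_zero |>.mono_left nhdsWithin_le_nhds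
    · filter_upwards [Ioo_mem_nhdsGT one_pos] with x hx using negMulLog_pos hx.1 hx.2
  refine (tendsto_inv_nhdsGT_zero.comp hpos).congr' ?_
  filter_upwards [Ioo_mem_nhdsGT (exp_pos (-1))] with x hx
  rw [Function.comp_apply, loglogMuBar, if_pos hx.2, one_div_mul_log_one_div]

lemma not_integrableOn_loglogMuBar : ¬ IntegrableOn loglogMuBar (Ioc 0 (exp (-1))) := by
  refine not_integrableOn_Ioc_of_tendsto_intervalIntegral_atTop (exp_pos (-1)) ?_
  refine tendsto_log_neg_log_nhdsGT_zero.congr' ?_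
  filter_upwards [Ioo_mem_nhdsGT (exp_pos (-1))] with x hx
  exact (integral_loglogMuBar hx.1 hx.2.le).symm

lemma setIntegral_Ioi_loglogMuBar {x : ℝ} (hx0 : 0 < x) (hxc : x ≤ exp (-1)) :
    ∫ v in Ioi x, loglogMuBar v = log (-log x) := by
  rw [setIntegral_eq_of_subset_of_forall_sdiff_eq_zero measurableSet_Ioi Ioc_subset_Ioi_self
      fun v hv => loglogMuBar_eq_zero_of_le (not_le.mp fun h => hv.2 ⟨hv.1, h⟩).le,
    ← intervalIntegral.integral_of_le hxc, integral_loglogMuBar hx0 hxc]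

lemma setIntegral_Ioi_loglogMuBar_of_le {x : ℝ} (hx : exp (-1) ≤ x) :
    ∫ v in Ioi x, loglogMuBar v = 0 :=
  setIntegral_eq_zero_of_forall_eq_zero fun _ hv => loglogMuBar_eq_zero_of_le (hx.trans hv.le)

lemma exp_setIntegral_Ioi_loglogMuBar {s : ℝ} (hs : 0 < s) :
    exp (∫ v in Ioi s, loglogMuBar v) = max (-log s) 1 := by
  rcases le_or_gt s (exp (-1)) with hsc | hsc
  · have hlog : 1 ≤ -log s := by linarith [(log_le_iff_le_exp hs).mpr hsc]
    rw [setIntegral_Ioi_loglogMuBar hs hsc, exp_log (by linarith), max_eq_left hlog]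
  · have hlog : -log s ≤ 1 := by linarith [(le_log_iff_exp_le hs).mpr hsc.le]
    rw [setIntegral_Ioi_loglogMuBar_of_le hsc.le, exp_zero, max_eq_right hlog]

lemma intervalIntegral_loglogMuBar_eq_setIntegral_Ioi {s : ℝ} (hs : s ≤ 1) :
    ∫ v in s..1, loglogMuBar v = ∫ v in Ioi s, loglogMuBar v := by
  rw [intervalIntegral.integral_of_le hs, setIntegral_eq_of_subset_of_forall_sdiff_eq_zero
    measurableSet_Ioi Ioc_subset_Ioi_self]
  intro v hv
  exact loglogMuBar_eq_zero_of_le (exp_neg_one_lt_one.trans (not_le.mp fun h => hv.2 ⟨hv.1, h⟩)).le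

lemma integrableOn_exp_intervalIntegral_loglogMuBar :
    IntegrableOn (fun s => exp (∫ v in s..1, loglogMuBar v)) (Ioc 0 1) := by
  have hlog : IntegrableOn (fun s => -log s) (Ioc 0 1) :=
    (intervalIntegral.intervalIntegrable_log' (a := 0) (b := 1)).1.neg
  have hmax : IntegrableOn (fun s => max (-log s) 1) (Ioc 0 1) :=
    hlog.sup (integrableOn_const (C := (1 : ℝ)) measure_Ioc_lt_top.ne)
  refine hmax.congr_fun (fun s hs => ?_) measurableSet_Ioc
  rw [intervalIntegral_loglogMuBar_eq_setIntegral_Ioi hs.2, exp_setIntegral_Ioi_loglogMuBar hs.1]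

/-- The example `μ̄(x) = 1/(x log(1/x)) 𝟙_{x < 1/e}` (with `b = 1`):
`μ̄(0⁺) = ∞`, `∫_0 μ̄ = ∞`, yet `𝓙 < ∞`, and the stationary distribution
satisfies `π([0,x]) = 1/log(1/x)` for `0 < x ≤ 1/e`. -/
theorem esn_loglog_example
    (μbar : ℝ → ℝ)
    (hμ : ∀ x, μbar x =
      if x < Real.exp (-1) then 1 / (x * Real.log (1 / x)) else 0) :
    Tendsto μbar (nhdsWithin 0 (Set.Ioi 0)) atTop ∧
    ¬ IntegrableOn μbar (Set.Ioc 0 (Real.exp (-1))) ∧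
    IntegrableOn (fun s => Real.exp (∫ v in s..1, μbar v)) (Set.Ioc 0 1) ∧
    (∀ x : ℝ, 0 < x → x ≤ Real.exp (-1) →
      Real.exp (-(∫ v in Set.Ioi x, μbar v)) = 1 / Real.log (1 / x)) := by
  obtain rfl : μbar = loglogMuBar := funext hμ
  refine ⟨tendsto_loglogMuBar_nhdsGT_zero, not_integrableOn_loglogMuBar,
    integrableOn_exp_intervalIntegral_loglogMuBar, fun x hx0 hxc => ?_⟩
  have hlog : 0 < -log x := neg_pos.mpr (log_neg hx0 (hxc.trans_lt exp_neg_one_lt_one))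
  rw [setIntegral_Ioi_loglogMuBar hx0 hxc, exp_neg, exp_log hlog, one_div, one_div, log_inv]
end

section
/- Let $\bar{\mu}$ be nonincreasing and finite on $(0,\infty)$, $b\in\mathbb{R}$, and $u>0$. Then $\frac{1}{t}\left(1-\exp\left(-\int_0^t\bar{\mu}(u+b(t-v))\,dv\right)\right)\to \bar{\mu}(u)$ as $t\to 0^+$, at every continuity point $u$ of $\bar{\mu}$. -/
/-!
After the substitution `w = t - v` the expression is the difference quotient at `0` of
`t ↦ 1 - exp (-∫₀ᵗ μ̄ (u + b w) dw)`, so its limit is the derivative there, which by the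
fundamental theorem of calculus and the chain rule is `μ̄ u`. The fundamental theorem only needs
the integrand to be continuous at `0` and measurable near `0`; the latter follows from the
monotonicity of `μ̄` near `u > 0`.
-/

open MeasureTheory Filter Set Topology

theorem AntitoneOn.antitone_comp_max {f : ℝ → ℝ} {a c : ℝ} (hf : AntitoneOn f (Ioi a))
    (hc : a < c) : Antitone fun x => f (max x c) := fun _ _ hxy =>
  hf (lt_of_lt_of_le hc (le_max_right _ _)) (lt_of_lt_of_le hc (le_max_right _ _))
    (max_le_max_right c hxy)

theorem AntitoneOn.stronglyMeasurableAtFilter_comp {α : Type*} [TopologicalSpace α]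
    [MeasurableSpace α] [OpensMeasurableSpace α] {μ : Measure α} {f : ℝ → ℝ} {φ : α → ℝ}
    {a : ℝ} {x : α} (hf : AntitoneOn f (Ioi a)) (hφ : Continuous φ) (hx : a < φ x) :
    StronglyMeasurableAtFilter (f ∘ φ) (𝓝 x) μ := by
  obtain ⟨c, hac, hcx⟩ := exists_between hx
  have hs : φ ⁻¹' Ioi c ∈ 𝓝 x := hφ.continuousAt.preimage_mem_nhds (isOpen_Ioi.mem_nhds hcx)
  refine ⟨_, hs, ?_⟩
  have hmeas : Measurable fun y => f (max (φ y) c) :=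
    (hf.antitone_comp_max hac).measurable.comp hφ.measurable
  refine hmeas.aestronglyMeasurable.congr ?_
  filter_upwards [ae_restrict_mem (hφ.measurable measurableSet_Ioi)] with y hy
  rw [Function.comp_apply, max_eq_left (le_of_lt (show c < φ y from hy))]

theorem tendsto_one_sub_exp_neg_integral_div {g : ℝ → ℝ}
    (hmeas : StronglyMeasurableAtFilter g (𝓝 0)) (hcont : ContinuousAt g 0) :
    Tendsto (fun t => (1 / t) * (1 - Real.exp (-(∫ v in (0:ℝ)..t, g (t - v)))))
      (𝓝[>] 0) (𝓝 (g 0)) := by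
  have hF : HasDerivAt (fun t => ∫ w in (0:ℝ)..t, g w) (g 0) 0 :=
    intervalIntegral.integral_hasDerivAt_right .refl hmeas hcont
  have hE : HasDerivAt (fun t => 1 - Real.exp (-(∫ w in (0:ℝ)..t, g w))) (g 0) 0 := by
    simpa using hF.neg.exp.const_sub 1
  convert hE.tendsto_slope_zero_right using 2 with t
  simp [intervalIntegral.integral_comp_sub_left]

theorem esn_small_time_asymptotics_general
    (b : ℝ) (μbar : ℝ → ℝ) (hmono : AntitoneOn μbar (Set.Ioi 0))
    (u : ℝ) (hu : 0 < u) (hcont : ContinuousAt μbar u) :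
    Tendsto
      (fun t => (1 / t) * (1 - Real.exp (-(∫ v in (0:ℝ)..t, μbar (u + b * (t - v))))))
      (nhdsWithin 0 (Set.Ioi 0)) (nhds (μbar u)) := by
  have hφ : Continuous fun w : ℝ => u + b * w := by fun_prop
  have hcont' : ContinuousAt (fun w => μbar (u + b * w)) 0 :=
    ContinuousAt.comp (by simpa using hcont) hφ.continuousAt
  simpa using tendsto_one_sub_exp_neg_integral_div
    (hmono.stronglyMeasurableAtFilter_comp hφ (by simpa using hu)) hcont'

/-- Small-time asymptotics of the one-dimensional law of the ESN:
`(1/t)(1 - exp(-∫_0^t μ̄(u + b(t-v)) dv)) → μ̄(u)` as `t → 0⁺`,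
at every continuity point `u > 0` of `μ̄`. -/
theorem esn_small_time_asymptotics
    (b : ℝ) (μbar : ℝ → ℝ) (hmono : AntitoneOn μbar (Set.Ioi 0))
    (hnonneg : ∀ x, 0 < x → 0 ≤ μbar x)
    (u : ℝ) (hu : 0 < u) (hcont : ContinuousAt μbar u) :
    Tendsto
      (fun t => (1 / t) * (1 - Real.exp (-(∫ v in (0:ℝ)..t, μbar (u + b * (t - v))))))
      (nhdsWithin 0 (Set.Ioi 0)) (nhds (μbar u)) :=
  esn_small_time_asymptotics_general b μbar hmono u hu hcont
end

section
/- Let $f:[0,\infty)\to\mathbb{R}$ be continuously differentiable with $f$ and $f'$ vanishing at infinity, $f'(0)=0$, and $\int_0^1|f'(v)|\bar{\mu}(v)\,dv<\infty$ for a given nonincreasing finite $\bar{\mu}:(0,\infty)\to[0,\infty)$. Then there exists a sequence $(f_n)_{n\geq 1}$ of continuously differentiable functions vanishing at infinity together with their derivatives, each constant on a neighborhood $[0,\epsilon_n]$ of $0$, such that $f_n\to f$ uniformly, $f_n'\to f'$ uniformly, and $|f_n'|\leq |f'|$ pointwise for all $n$. -/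
open MeasureTheory Filter

/-- Approximation lemma: any `f ∈ 𝒟₁` (C¹ on `[0,∞)`, `f` and `f'` vanishing at `∞`,
`f'(0) = 0`, `∫_0^1 |f'| μ̄ < ∞`) can be approximated by functions constant near `0`,
with `fₙ → f` and `fₙ' → f'` uniformly and `|fₙ'| ≤ |f'|`. -/
theorem esn_approximation_lemma
    (μbar : ℝ → ℝ) (hmono : AntitoneOn μbar (Set.Ioi 0))
    (hnonneg : ∀ x, 0 < x → 0 ≤ μbar x)
    (f f' : ℝ → ℝ)
    (hderiv : ∀ x ∈ Set.Ici (0:ℝ), HasDerivWithinAt f (f' x) (Set.Ici 0) x)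
    (hcont : ContinuousOn f' (Set.Ici 0))
    (hf0 : Tendsto f atTop (nhds 0))
    (hf'0 : Tendsto f' atTop (nhds 0))
    (hf'zero : f' 0 = 0)
    (hint : IntegrableOn (fun v => |f' v| * μbar v) (Set.Ioc 0 1)) :
    ∃ (F F' : ℕ → ℝ → ℝ) (ε : ℕ → ℝ),
      (∀ n : ℕ, 1 ≤ n →
        0 < ε n ∧
        (∀ x ∈ Set.Ici (0:ℝ), HasDerivWithinAt (F n) (F' n x) (Set.Ici 0) x) ∧
        ContinuousOn (F' n) (Set.Ici 0) ∧
        Tendsto (F n) atTop (nhds 0) ∧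
        Tendsto (F' n) atTop (nhds 0) ∧
        (∀ x ∈ Set.Icc (0:ℝ) (ε n), F n x = F n 0) ∧
        (∀ x ∈ Set.Ici (0:ℝ), |F' n x| ≤ |f' x|)) ∧
      TendstoUniformlyOn F f atTop (Set.Ici 0) ∧
      TendstoUniformlyOn F' f' atTop (Set.Ici 0) := by
  classical
  -- continuous extension of f' to ℝ
  set f'e : ℝ → ℝ := fun x => f' (max x 0) with hf'e_def
  have hf'e_cont : Continuous f'e :=
    hcont.comp_continuous (continuous_id.max continuous_const) (fun x => le_max_right x 0)
  have hf'e_eq : ∀ x : ℝ, 0 ≤ x → f'e x = f' x := by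
    intro x hx; simp [hf'e_def, max_eq_left hx]
  -- the cutoff
  set φ : ℕ → ℝ → ℝ := fun n x => min 1 (max ((n : ℝ) * x - 1) 0) with hφ_def
  have hφ_nonneg : ∀ n x, 0 ≤ φ n x := fun n x =>
    le_min zero_le_one (le_max_right _ _)
  have hφ_le_one : ∀ n x, φ n x ≤ 1 := fun n x => min_le_left _ _
  have hφ_zero : ∀ (n : ℕ) (x : ℝ), (n : ℝ) * x ≤ 1 → φ n x = 0 := by
    intro n x h
    simp only [hφ_def]
    rw [max_eq_right (by linarith), min_eq_right zero_le_one]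
  have hφ_one : ∀ (n : ℕ) (x : ℝ), 2 ≤ (n : ℝ) * x → φ n x = 1 := by
    intro n x h
    simp only [hφ_def]
    rw [max_eq_left (by linarith), min_eq_left (by linarith)]
  set g : ℕ → ℝ → ℝ := fun n x => f'e x * φ n x with hg_def
  have hg_cont : ∀ n, Continuous (g n) := by
    intro n
    exact hf'e_cont.mul (continuous_const.min
      (((continuous_const.mul continuous_id).sub continuous_const).max continuous_const))
  set F : ℕ → ℝ → ℝ := fun n x => f (2 / (n : ℝ)) + ∫ t in (2 / (n : ℝ))..x, g n t with hF_def
  -- FTC for f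
  have hfc : ContinuousOn f (Set.Ici 0) := fun x hx => (hderiv x hx).continuousWithinAt
  have hftc : ∀ a b : ℝ, 0 ≤ a → a ≤ b → ∫ t in a..b, f'e t = f b - f a := by
    intro a b ha hab
    apply intervalIntegral.integral_eq_sub_of_hasDeriv_right_of_le hab
      (hfc.mono (Set.Icc_subset_Ici_self.trans (Set.Ici_subset_Ici.mpr ha)))
    · intro x hx
      have hx0 : 0 < x := lt_of_le_of_lt ha hx.1
      have := (hderiv x hx0.le).hasDerivAt (Ici_mem_nhds hx0)
      rw [hf'e_eq x hx0.le]
      exact this.hasDerivWithinAt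
    · exact hf'e_cont.intervalIntegrable a b
  -- g agrees with f'e far from 0
  have hg_far : ∀ (n : ℕ) (x : ℝ), 2 / (n : ℝ) ≤ x → 0 < (n : ℝ) → g n x = f'e x := by
    intro n x hx hn
    have : 2 ≤ (n : ℝ) * x := by
      rw [div_le_iff₀ hn] at hx; linarith [hx]
    rw [hg_def]; simp only
    rw [hφ_one n x this, mul_one]
  -- F equals f far from 0
  have hF_far : ∀ (n : ℕ) (x : ℝ), 0 < (n : ℝ) → 2 / (n : ℝ) ≤ x → F n x = f x := by
    intro n x hn hx
    have h2n : (0:ℝ) ≤ 2 / (n : ℝ) := by positivity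
    have hcongr : ∫ t in (2 / (n : ℝ))..x, g n t = ∫ t in (2 / (n : ℝ))..x, f'e t := by
      apply intervalIntegral.integral_congr
      intro t ht
      rw [Set.uIcc_of_le hx] at ht
      exact hg_far n t ht.1 hn
    rw [hF_def]; simp only
    rw [hcongr, hftc _ _ h2n hx]; ring
  -- key uniform estimate
  have hkey : ∀ ε : ℝ, 0 < ε → ∃ N : ℕ, 1 ≤ N ∧ ∀ n ≥ N, ∀ x ∈ Set.Ici (0:ℝ),
      |f x - F n x| < ε ∧ |f' x - g n x| < ε := by
    intro ε hε
    -- continuity of f' at 0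
    have h0 : ContinuousWithinAt f' (Set.Ici 0) 0 := hcont 0 Set.self_mem_Ici
    rw [Metric.continuousWithinAt_iff] at h0
    obtain ⟨δ₀, hδ₀, hδ⟩ := h0 (ε / 2) (by positivity)
    set δ : ℝ := min (δ₀ / 2) 1 with hδdef
    have hδpos : 0 < δ := lt_min (by positivity) one_pos
    have hδ1 : δ ≤ 1 := min_le_right _ _
    have hsmall : ∀ t : ℝ, 0 ≤ t → t ≤ δ → |f' t| ≤ ε / 2 := by
      intro t ht htδ
      have : dist t 0 < δ₀ := by
        rw [Real.dist_eq, sub_zero, abs_of_nonneg ht]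
        calc t ≤ δ := htδ
        _ ≤ δ₀ / 2 := min_le_left _ _
        _ < δ₀ := by linarith
      have := hδ ht this
      rw [hf'zero, Real.dist_eq, sub_zero] at this
      exact this.le
    obtain ⟨N, hN⟩ := exists_nat_ge (2 / δ)
    refine ⟨max N 1, le_max_right _ _, fun n hn x hx => ?_⟩
    have hn1 : 1 ≤ n := le_trans (le_max_right N 1) hn
    have hnpos : (0:ℝ) < n := by exact_mod_cast hn1
    have h2nδ : 2 / (n : ℝ) ≤ δ := by
      rw [div_le_iff₀ hnpos]
      have : (2:ℝ) / δ ≤ n := le_trans hN (by exact_mod_cast le_trans (le_max_left N 1) hn)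
      rw [div_le_iff₀ hδpos] at this
      linarith
    have hx0 : (0:ℝ) ≤ x := hx
    by_cases hxn : 2 / (n : ℝ) ≤ x
    · constructor
      · rw [hF_far n x hnpos hxn]; simpa using hε
      · rw [hg_far n x hxn hnpos, hf'e_eq x hx0]; simpa using hε
    · push_neg at hxn
      constructor
      · -- x < 2/n ≤ δ
        have hFd : F n x - f x = ∫ t in x..(2 / (n : ℝ)), (f'e t - g n t) := by
          rw [intervalIntegral.integral_sub (hf'e_cont.intervalIntegrable _ _)
            ((hg_cont n).intervalIntegrable _ _)]
          rw [hftc x (2 / (n : ℝ)) hx0 hxn.le]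
          rw [hF_def]; simp only
          rw [intervalIntegral.integral_symm x (2 / (n : ℝ))]
          ring
        have hbound : |∫ t in x..(2 / (n : ℝ)), (f'e t - g n t)| ≤ (ε / 2) * |2 / (n : ℝ) - x| := by
          rw [← Real.norm_eq_abs]
          apply intervalIntegral.norm_integral_le_of_norm_le_const
          intro t ht
          rw [Set.uIoc_of_le hxn.le] at ht
          have ht0 : 0 ≤ t := le_trans hx0 ht.1.le
          have htδ : t ≤ δ := le_trans ht.2 h2nδ
          have h1 : |f'e t - g n t| = |f'e t| * (1 - φ n t) := by
            rw [hg_def]; simp only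
            rw [← mul_one_sub, abs_mul,
              abs_of_nonneg (a := 1 - φ n t) (by linarith [hφ_le_one n t])]
          rw [Real.norm_eq_abs, h1, hf'e_eq t ht0]
          calc |f' t| * (1 - φ n t) ≤ |f' t| * 1 := by
                apply mul_le_mul_of_nonneg_left (by linarith [hφ_nonneg n t]) (abs_nonneg _)
          _ = |f' t| := mul_one _
          _ ≤ ε / 2 := hsmall t ht0 htδ
        have habs : |2 / (n : ℝ) - x| ≤ 1 := by
          rw [abs_of_nonneg (by linarith)]
          linarith [h2nδ, hδ1]
        have : |F n x - f x| ≤ ε / 2 := by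
          rw [hFd]
          calc |∫ t in x..(2 / (n : ℝ)), (f'e t - g n t)| ≤ (ε / 2) * |2 / (n : ℝ) - x| := hbound
          _ ≤ (ε / 2) * 1 := by
              apply mul_le_mul_of_nonneg_left habs (by positivity)
          _ = ε / 2 := mul_one _
        rw [abs_sub_comm] at this
        linarith
      · have h1 : |f' x - g n x| = |f' x| * (1 - φ n x) := by
          rw [hg_def]; simp only
          rw [hf'e_eq x hx0, ← mul_one_sub, abs_mul,
            abs_of_nonneg (a := 1 - φ n x) (by linarith [hφ_le_one n x])]
        rw [h1]
        calc |f' x| * (1 - φ n x) ≤ |f' x| * 1 :=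
              mul_le_mul_of_nonneg_left (by linarith [hφ_nonneg n x]) (abs_nonneg _)
        _ = |f' x| := mul_one _
        _ ≤ ε / 2 := hsmall x hx0 (le_trans hxn.le h2nδ)
        _ < ε := by linarith
  refine ⟨F, g, fun n => 1 / (n : ℝ), ?_, ?_, ?_⟩
  · intro n hn
    have hnpos : (0:ℝ) < n := by exact_mod_cast hn
    refine ⟨by positivity, ?_, ?_, ?_, ?_, ?_, ?_⟩
    · intro x hx
      have : HasDerivAt (fun u => ∫ t in (2 / (n : ℝ))..u, g n t) (g n x) x :=
        ((hg_cont n).integral_hasStrictDerivAt (2 / (n : ℝ)) x).hasDerivAt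
      exact ((this.const_add (f (2 / (n : ℝ))))).hasDerivWithinAt
    · exact (hg_cont n).continuousOn
    · -- Tendsto (F n) atTop (nhds 0)
      apply hf0.congr'
      filter_upwards [eventually_ge_atTop (2 / (n : ℝ))] with x hx
      exact (hF_far n x hnpos hx).symm
    · apply hf'0.congr'
      filter_upwards [eventually_ge_atTop (2 / (n : ℝ)),
        eventually_ge_atTop (0:ℝ)] with x hx hx0
      rw [hg_far n x hx hnpos, hf'e_eq x hx0]
    · -- constant near 0
      intro x hx
      have hg0 : ∀ t : ℝ, 0 ≤ t → t ≤ 1 / (n : ℝ) → g n t = 0 := by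
        intro t ht htn
        have : (n : ℝ) * t ≤ 1 := by
          rw [le_div_iff₀ hnpos] at htn; linarith [htn]
        rw [hg_def]; simp only
        rw [hφ_zero n t this, mul_zero]
      have hsplit : F n x - F n 0 = ∫ t in (0:ℝ)..x, g n t := by
        rw [hF_def]; simp only
        rw [← intervalIntegral.integral_add_adjacent_intervals
          (((hg_cont n).intervalIntegrable (2 / (n : ℝ)) 0))
          (((hg_cont n).intervalIntegrable 0 x))]
        ring
      have hzero : ∫ t in (0:ℝ)..x, g n t = 0 := by
        rw [intervalIntegral.integral_congr (g := fun _ => (0:ℝ))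
          (fun t ht => by
            rw [Set.uIcc_of_le hx.1] at ht
            exact hg0 t ht.1 (le_trans ht.2 hx.2))]
        simp
      linarith [hsplit, hzero, hsplit ▸ hzero]
    · intro x hx
      rw [hg_def]; simp only
      rw [abs_mul, hf'e_eq x hx,
        abs_of_nonneg (hφ_nonneg n x)]
      calc |f' x| * φ n x ≤ |f' x| * 1 :=
            mul_le_mul_of_nonneg_left (hφ_le_one n x) (abs_nonneg _)
      _ = |f' x| := mul_one _
  · rw [Metric.tendstoUniformlyOn_iff]
    intro ε hε
    obtain ⟨N, _, hN⟩ := hkey ε hε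
    filter_upwards [eventually_ge_atTop N] with n hn x hx
    rw [Real.dist_eq]
    exact (hN n hn x hx).1
  · rw [Metric.tendstoUniformlyOn_iff]
    intro ε hε
    obtain ⟨N, _, hN⟩ := hkey ε hε
    filter_upwards [eventually_ge_atTop N] with n hn x hx
    rw [Real.dist_eq]
    exact (hN n hn x hx).2
end
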